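/- arXiv:2503.04497 — 5 statements merged into one kernel-verified Lean document; each statement's English description precedes it below -/
import Mathlib

section
/- Let N, K be positive natural numbers and let W be a complex matrix indexed by (Fin K × Fin N) × (Fin K × Fin N). Then W commutes with the Kronecker product I_K ⊗ U for every unitary matrix U ∈ ℂ^{N×N} (i.e., (I_K ⊗ U) * W = W * (I_K ⊗ U) for all U with UᴴU = I_N) if and only if there exists a matrix G ∈ ℂ^{K×K} such that W = G ⊗ I_N, where (G ⊗ I_N)_{(k,n),(k',n')} = G_{k,k'} if n = n' and 0 otherwise. -/
/-!
Read through `Matrix.comp`, `W` is an `ι × ι` matrix of `n × n` blocks and `1 ⊗ₖ U` is the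
block-diagonal matrix with `U` on the diagonal, so `W` commutes with every `1 ⊗ₖ U` iff each block
commutes with every unitary. Such a block is scalar: commuting with the diagonal sign flips kills
its off-diagonal entries, and commuting with the transposition matrices makes its diagonal
constant. The scalars form `G`.
-/

open Matrix Kronecker

namespace Matrix

variable {ι n R : Type*}

section Unitary

variable [Fintype n] [DecidableEq n]

theorem conjTranspose_diagonal_mul_self [Semiring R] [StarRing R] {d : n → R}
    (hd : ∀ i, star (d i) * d i = 1) : (diagonal d)ᴴ * diagonal d = 1 := by
  rw [diagonal_conjTranspose, diagonal_mul_diagonal, ← diagonal_one]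
  exact congrArg diagonal (funext hd)

theorem conjTranspose_permMatrix_mul_self [Semiring R] [StarRing R] (σ : Equiv.Perm n) :
    (σ.permMatrix R)ᴴ * σ.permMatrix R = 1 := by
  rw [conjTranspose_permMatrix, ← permMatrix_mul, mul_inv_cancel, permMatrix_one]

theorem apply_eq_zero_of_commute_diagonal_update_neg_one [Ring R] [IsAddTorsionFree R]
    {M : Matrix n n R} {i j : n} (hM : Commute (diagonal (Function.update 1 i (-1))) M)
    (hij : j ≠ i) : M i j = 0 := by
  have := congrFun₂ hM i j
  rw [diagonal_mul, mul_diagonal, Function.update_self, Function.update_of_ne hij] at this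
  simpa [neg_eq_self] using this

theorem apply_self_eq_of_commute_permMatrix_swap [Semiring R] {M : Matrix n n R} {i j : n}
    (hM : Commute ((Equiv.swap i j).permMatrix R) M) : M i i = M j j := by
  have := congrFun₂ hM i j
  simp only [PEquiv.toMatrix_toPEquiv_mul, PEquiv.mul_toMatrix_toPEquiv, submatrix_apply,
    id, Equiv.swap_apply_left, Equiv.symm_swap, Equiv.swap_apply_right] at this
  exact this.symm

theorem mem_range_scalar_of_forall_unitary_commute [Ring R] [StarRing R] [IsAddTorsionFree R]
    {M : Matrix n n R} (hM : ∀ U : Matrix n n R, Uᴴ * U = 1 → Commute U M) :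
    M ∈ Set.range (scalar n) := by
  cases isEmpty_or_nonempty n
  · exact ⟨0, Subsingleton.elim _ _⟩
  obtain ⟨i₀⟩ := ‹Nonempty n›
  have off_diag {i j : n} (hij : j ≠ i) : M i j = 0 := by
    refine apply_eq_zero_of_commute_diagonal_update_neg_one (hM _ ?_) hij
    refine conjTranspose_diagonal_mul_self fun k => ?_
    rcases eq_or_ne k i with rfl | hk
    · simp
    · simp [Function.update_of_ne hk]
  have diag_const (i : n) : M i i = M i₀ i₀ :=
    apply_self_eq_of_commute_permMatrix_swap (hM _ (conjTranspose_permMatrix_mul_self _))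
  refine ⟨M i₀ i₀, Matrix.ext fun i j => ?_⟩
  rcases eq_or_ne i j with rfl | hij
  · simp [diag_const]
  · simp [diagonal_apply_ne _ hij, off_diag hij.symm]

end Unitary

theorem commute_diagonal_const_iff [Fintype ι] [DecidableEq ι] [Semiring R] {a : R}
    {M : Matrix ι ι R} : Commute (diagonal fun _ => a) M ↔ ∀ i j, Commute a (M i j) := by
  simp only [Commute, SemiconjBy, ← Matrix.ext_iff, diagonal_mul, mul_diagonal]

theorem comp_symm_one_kronecker [DecidableEq ι] [Semiring R] (U : Matrix n n R) :
    (comp ι ι n n R).symm ((1 : Matrix ι ι R) ⊗ₖ U) = diagonal fun _ => U := by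
  ext k k' i j
  rcases eq_or_ne k k' with rfl | hk
  · simp
  · simp [one_apply_ne hk, diagonal_apply_ne _ hk]

theorem comp_map_scalar [Fintype n] [DecidableEq n] [Semiring R] (G : Matrix ι ι R) :
    comp ι ι n n R (G.map (scalar n)) = G ⊗ₖ (1 : Matrix n n R) := by
  ext ⟨k, i⟩ ⟨k', j⟩
  simp [scalar_apply, diagonal_apply, one_apply]

theorem forall_unitary_commute_one_kronecker_iff [Fintype ι] [DecidableEq ι] [Fintype n]
    [DecidableEq n] [CommRing R] [StarRing R] [IsAddTorsionFree R]
    (W : Matrix (ι × n) (ι × n) R) :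
    (∀ U : Matrix n n R, Uᴴ * U = 1 → Commute ((1 : Matrix ι ι R) ⊗ₖ U) W) ↔
      ∃ G : Matrix ι ι R, W = G ⊗ₖ (1 : Matrix n n R) := by
  constructor
  · intro hW
    have blocks_scalar (k k' : ι) : (comp ι ι n n R).symm W k k' ∈ Set.range (scalar n) := by
      refine mem_range_scalar_of_forall_unitary_commute fun U hU => ?_
      have := (hW U hU).map (compRingEquiv ι n R).symm
      rw [compRingEquiv_symm_apply, compRingEquiv_symm_apply, comp_symm_one_kronecker,
        commute_diagonal_const_iff] at this
      exact this k k'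
    choose G hG using blocks_scalar
    refine ⟨of G, ?_⟩
    rw [← comp_map_scalar, ← (comp ι ι n n R).apply_symm_apply W]
    exact congrArg _ (funext₂ fun k k' => (hG k k').symm)
  · rintro ⟨G, rfl⟩ U -
    simp only [Commute, SemiconjBy, ← mul_kronecker_mul, one_mul, mul_one]

end Matrix

theorem commutes_with_all_IK_kron_unitary_iff_kron_identity_general
    (N K : ℕ)
    (W : Matrix (Fin K × Fin N) (Fin K × Fin N) ℂ) :
    (∀ U : Matrix (Fin N) (Fin N) ℂ, Uᴴ * U = 1 →
      ((1 : Matrix (Fin K) (Fin K) ℂ) ⊗ₖ U) * W = W * ((1 : Matrix (Fin K) (Fin K) ℂ) ⊗ₖ U))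
    ↔ ∃ G : Matrix (Fin K) (Fin K) ℂ, W = G ⊗ₖ (1 : Matrix (Fin N) (Fin N) ℂ) :=
  forall_unitary_commute_one_kronecker_iff W

/-- A matrix `W` indexed by `(Fin K × Fin N) × (Fin K × Fin N)` commutes with `I_K ⊗ U`
for every unitary `U` iff `W = G ⊗ I_N` for some `G`. -/
theorem commutes_with_all_IK_kron_unitary_iff_kron_identity
    (N K : ℕ) (hN : 0 < N) (hK : 0 < K)
    (W : Matrix (Fin K × Fin N) (Fin K × Fin N) ℂ) :
    (∀ U : Matrix (Fin N) (Fin N) ℂ, Uᴴ * U = 1 →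
      ((1 : Matrix (Fin K) (Fin K) ℂ) ⊗ₖ U) * W = W * ((1 : Matrix (Fin K) (Fin K) ℂ) ⊗ₖ U))
    ↔ ∃ G : Matrix (Fin K) (Fin K) ℂ, W = G ⊗ₖ (1 : Matrix (Fin N) (Fin N) ℂ) :=
  commutes_with_all_IK_kron_unitary_iff_kron_identity_general N K W
end

section
/- Let N, K be positive natural numbers and let T : Matrix (Fin N) (Fin K) ℂ → Matrix (Fin N) (Fin K) ℂ be a ℂ-linear map. Then T satisfies T(U * X) = U * T(X) for every unitary matrix U ∈ ℂ^{N×N} and every X ∈ ℂ^{N×K} if and only if there exists a matrix G ∈ ℂ^{K×K} such that T(X) = X * G for all X. -/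
/-!
Every complex square matrix is a linear combination of (four) unitaries, so a linear `T` that
commutes with left multiplication by unitaries commutes with left multiplication by every matrix.
Writing `X = ∑ₖ (X Eₖ₀) E₀ₖ` with matrix units `E`, this gives `T X = X G` for
`G = ∑ₖ Eₖ₀ T(E₀ₖ)`.
-/

open Matrix

namespace Matrix

variable {m n R : Type*} [Fintype m] [DecidableEq m]

theorem eq_sum_mul_single_mul_single [Fintype n] [DecidableEq n] [Semiring R] (z : m)
    (X : Matrix m n R) :
    X = ∑ k : n, (X * single k z (1 : R)) * single z k (1 : R) := by
  simp only [Matrix.mul_assoc, single_mul_single_same, mul_one, ← Matrix.mul_sum, sum_single_one,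
    Matrix.mul_one]

theorem exists_eq_mul_of_map_mul_left [Fintype n] [DecidableEq n] [Semiring R] [Nonempty m]
    (T : Matrix m n R →+ Matrix m n R) (hT : ∀ (A : Matrix m m R) X, T (A * X) = A * T X) :
    ∃ G : Matrix n n R, ∀ X, T X = X * G := by
  obtain ⟨z⟩ := ‹Nonempty m›
  refine ⟨∑ k, single k z (1 : R) * T (single z k 1), fun X => ?_⟩
  conv_lhs => rw [eq_sum_mul_single_mul_single z X]
  rw [map_sum, Matrix.mul_sum]
  exact Finset.sum_congr rfl fun k _ => by rw [hT, Matrix.mul_assoc]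

theorem map_mul_left_of_map_unitary_mul_left (T : Matrix m n ℂ →ₗ[ℂ] Matrix m n ℂ)
    (hT : ∀ (U : Matrix m m ℂ) X, Uᴴ * U = 1 → T (U * X) = U * T X)
    (A : Matrix m m ℂ) (X : Matrix m n ℂ) : T (A * X) = A * T X := by
  let _ := Matrix.instCStarAlgebra (n := m)
  have hA : A ∈ Submodule.span ℂ (unitary (Matrix m m ℂ) : Set (Matrix m m ℂ)) := by
    rw [CStarAlgebra.span_unitary]; trivial
  induction hA using Submodule.span_induction with
  | mem U hU => exact hT U X hU.1
  | zero => simp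
  | add A B _ _ hA hB => simp only [Matrix.add_mul, map_add, hA, hB]
  | smul c A _ hA => simp only [Matrix.smul_mul, map_smul, hA]

end Matrix

theorem linear_unitary_equivariant_iff_right_mul_general
    (N K : ℕ) (hN : 0 < N)
    (T : Matrix (Fin N) (Fin K) ℂ →ₗ[ℂ] Matrix (Fin N) (Fin K) ℂ) :
    (∀ (U : Matrix (Fin N) (Fin N) ℂ) (X : Matrix (Fin N) (Fin K) ℂ),
        Uᴴ * U = 1 → T (U * X) = U * T X)
    ↔ ∃ G : Matrix (Fin K) (Fin K) ℂ, ∀ X : Matrix (Fin N) (Fin K) ℂ, T X = X * G := by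
  constructor
  · intro hT
    have : Nonempty (Fin N) := ⟨⟨0, hN⟩⟩
    exact exists_eq_mul_of_map_mul_left T.toAddMonoidHom
      (map_mul_left_of_map_unitary_mul_left T hT)
  · rintro ⟨G, hG⟩ U X -
    rw [hG, hG, Matrix.mul_assoc]

/-- A `ℂ`-linear map `T` on `N × K` complex matrices satisfies `T (U * X) = U * T X`
for every unitary `U` iff `T X = X * G` for some fixed `G ∈ ℂ^{K×K}`. -/
theorem linear_unitary_equivariant_iff_right_mul
    (N K : ℕ) (hN : 0 < N) (hK : 0 < K)
    (T : Matrix (Fin N) (Fin K) ℂ →ₗ[ℂ] Matrix (Fin N) (Fin K) ℂ) :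
    (∀ (U : Matrix (Fin N) (Fin N) ℂ) (X : Matrix (Fin N) (Fin K) ℂ),
        Uᴴ * U = 1 → T (U * X) = U * T X)
    ↔ ∃ G : Matrix (Fin K) (Fin K) ℂ, ∀ X : Matrix (Fin N) (Fin K) ℂ, T X = X * G :=
  linear_unitary_equivariant_iff_right_mul_general N K hN T
end

section
/- Let N, K be positive natural numbers and let ψ : Matrix (Fin N) (Fin K) ℂ × Matrix (Fin N) (Fin K) ℂ × (Fin K → ℂ) → Matrix (Fin N) (Fin K) ℂ be ℂ-linear (in the triple of arguments jointly). If ψ(U * X, U * H, λ) = U * ψ(X, H, λ) for every unitary matrix U ∈ ℂ^{N×N}, every X, H ∈ ℂ^{N×K} and every λ : Fin K → ℂ, then there exist matrices G₁, G₂ ∈ ℂ^{K×K} such that ψ(X, H, λ) = X * G₁ + H * G₂ for all X, H, λ; in particular ψ does not depend on λ. -/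
/-!
Unitary matrices span `Matrix n n ℂ` (it is a C⋆-algebra), so a linear map commuting with left
multiplication by every unitary commutes with left multiplication by every matrix. Testing this
against the matrix units `E i₀ i` expresses row `i` of the output through row `i` of the input, which
makes the map a right multiplication. The weights drop out because `-1` is unitary, which forces
`ψ (0, 0, λ) = -ψ (0, 0, λ)`.
-/

open Matrix

namespace Matrix

variable {m n : Type*} [Fintype m] [DecidableEq m] [Fintype n] [DecidableEq n]

theorem single_one_mul_eq_sum {R : Type*} [Semiring R] (i₀ i : m) (X : Matrix m n R) :
    single i₀ i (1 : R) * X = ∑ j, X i j • single i₀ j 1 := by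
  ext a b
  by_cases ha : a = i₀
  · subst ha
    simp [single_apply, Matrix.sum_apply]
  · rw [single_mul_apply_of_ne (h := ha)]
    simp [Matrix.sum_apply, Ne.symm ha]

theorem exists_eq_mul_of_map_mul {R : Type*} [Semiring R] (f : Matrix m n R →ₗ[R] Matrix m n R)
    (hf : ∀ (A : Matrix m m R) (X : Matrix m n R), f (A * X) = A * f X) :
    ∃ G : Matrix n n R, ∀ X, f X = X * G := by
  rcases isEmpty_or_nonempty m with _ | ⟨⟨i₀⟩⟩
  · exact ⟨0, fun _ => Subsingleton.elim _ _⟩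
  refine ⟨of fun j k => f (single i₀ j 1) i₀ k, fun X => ?_⟩
  ext i k
  calc f X i k = (single i₀ i (1 : R) * f X) i₀ k := by rw [single_mul_apply_same, one_mul]
    _ = f (∑ j, X i j • single i₀ j 1) i₀ k := by rw [← hf, single_one_mul_eq_sum]
    _ = (X * of fun j k => f (single i₀ j 1) i₀ k) i k := by
      simp only [map_sum, map_smul, Matrix.sum_apply, smul_apply, smul_eq_mul, mul_apply, of_apply]

open scoped Matrix.Norms.L2Operator in
theorem span_unitary : Submodule.span ℂ (unitary (Matrix n n ℂ) : Set (Matrix n n ℂ)) = ⊤ :=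
  CStarAlgebra.span_unitary _

theorem exists_eq_mul_of_map_unitary_mul (f : Matrix m n ℂ →ₗ[ℂ] Matrix m n ℂ)
    (hf : ∀ U ∈ unitary (Matrix m m ℂ), ∀ X, f (U * X) = U * f X) :
    ∃ G : Matrix n n ℂ, ∀ X, f X = X * G := by
  refine exists_eq_mul_of_map_mul f fun A X => ?_
  have hA : A ∈ Submodule.span ℂ (unitary (Matrix m m ℂ) : Set (Matrix m m ℂ)) := by
    simp [span_unitary]
  induction hA using Submodule.span_induction with
  | mem U hU => exact hf U hU X
  | zero => simp
  | add A B _ _ hA hB => rw [Matrix.add_mul, map_add, hA, hB, Matrix.add_mul]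
  | smul c A _ hA => rw [Matrix.smul_mul, map_smul, hA, Matrix.smul_mul]

end Matrix

theorem linear_unitary_equivariant_layer_ignores_weights_general
    (N K : ℕ)
    (ψ : (Matrix (Fin N) (Fin K) ℂ × Matrix (Fin N) (Fin K) ℂ × (Fin K → ℂ))
          →ₗ[ℂ] Matrix (Fin N) (Fin K) ℂ)
    (heq : ∀ (U : Matrix (Fin N) (Fin N) ℂ) (X H : Matrix (Fin N) (Fin K) ℂ)
        (lam : Fin K → ℂ), Uᴴ * U = 1 →
        ψ (U * X, U * H, lam) = U * ψ (X, H, lam)) :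
    ∃ G₁ G₂ : Matrix (Fin K) (Fin K) ℂ,
      ∀ (X H : Matrix (Fin N) (Fin K) ℂ) (lam : Fin K → ℂ),
        ψ (X, H, lam) = X * G₁ + H * G₂ := by
  have hweights (lam : Fin K → ℂ) : ψ (0, 0, lam) = 0 := by
    have h : ψ (0, 0, lam) = -ψ (0, 0, lam) := by simpa using heq (-1) 0 0 lam (by simp)
    ext i j
    exact self_eq_neg.mp (congr_fun₂ h i j)
  obtain ⟨G₁, hG₁⟩ := exists_eq_mul_of_map_unitary_mul (ψ ∘ₗ LinearMap.inl ℂ _ _)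
    fun U hU X => by
      simpa [Prod.mk_zero_zero] using heq U X 0 0 (Unitary.star_mul_self_of_mem hU)
  obtain ⟨G₂, hG₂⟩ := exists_eq_mul_of_map_unitary_mul
    (ψ ∘ₗ LinearMap.inr ℂ _ _ ∘ₗ LinearMap.inl ℂ _ _)
    fun U hU H => by simpa using heq U 0 H 0 (Unitary.star_mul_self_of_mem hU)
  refine ⟨G₁, G₂, fun X H lam => ?_⟩
  have hsplit : ((X, H, lam) : _ × _ × _) = (X, 0, 0) + (0, H, 0) + (0, 0, lam) := by simp
  rw [hsplit, map_add, map_add, hweights, add_zero]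
  simpa [Prod.mk_zero_zero] using congr($(hG₁ X) + $(hG₂ H))

/-- A `ℂ`-linear layer `ψ(X, H, λ)` that is unitarily equivariant in the antenna dimension
must have the form `ψ(X, H, λ) = X * G₁ + H * G₂`; in particular it cannot depend on the
user weights `λ`. -/
theorem linear_unitary_equivariant_layer_ignores_weights
    (N K : ℕ) (hN : 0 < N) (hK : 0 < K)
    (ψ : (Matrix (Fin N) (Fin K) ℂ × Matrix (Fin N) (Fin K) ℂ × (Fin K → ℂ))
          →ₗ[ℂ] Matrix (Fin N) (Fin K) ℂ)
    (heq : ∀ (U : Matrix (Fin N) (Fin N) ℂ) (X H : Matrix (Fin N) (Fin K) ℂ)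
        (lam : Fin K → ℂ), Uᴴ * U = 1 →
        ψ (U * X, U * H, lam) = U * ψ (X, H, lam)) :
    ∃ G₁ G₂ : Matrix (Fin K) (Fin K) ℂ,
      ∀ (X H : Matrix (Fin N) (Fin K) ℂ) (lam : Fin K → ℂ),
        ψ (X, H, lam) = X * G₁ + H * G₂ :=
  linear_unitary_equivariant_layer_ignores_weights_general N K ψ heq
end

section
/- Let N, K be natural numbers and let 𝒢 : Matrix (Fin K) (Fin K) ℂ → Matrix (Fin K) (Fin K) ℂ → Matrix (Fin K) (Fin K) ℂ satisfy, for every permutation σ of Fin K and all E₁, E₂ ∈ ℂ^{K×K}, 𝒢(E₁∘(σ,σ), E₂∘(σ,σ)) = 𝒢(E₁, E₂)∘(σ,σ), where M∘(σ,σ) denotes the matrix with entries M_{σ(i),σ(j)}. Define F(X, H, α) = X * 𝒢(Hᴴ * X, diagonal(α) * Hᴴ * X). Then for every permutation σ of Fin K, F(X^σ, H^σ, α∘σ) = (F(X, H, α))^σ, where M^σ denotes the matrix whose k-th column is the σ(k)-th column of M. -/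
open Matrix

/-- If `𝒢` is permutation equivariant in the sense
`𝒢(Π E₁ Πᵀ, Π E₂ Πᵀ) = Π 𝒢(E₁, E₂) Πᵀ` (written with `submatrix σ σ`), then the layer
`F(X, H, α) = X * 𝒢(Hᴴ X, diagonal(α) Hᴴ X)` is permutation equivariant with respect to
the user indices. -/
theorem nonlinear_layer_permutation_equivariant
    (N K : ℕ)
    (𝒢 : Matrix (Fin K) (Fin K) ℂ → Matrix (Fin K) (Fin K) ℂ → Matrix (Fin K) (Fin K) ℂ)
    (h𝒢 : ∀ (σ : Equiv.Perm (Fin K)) (E₁ E₂ : Matrix (Fin K) (Fin K) ℂ),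
        𝒢 (E₁.submatrix σ σ) (E₂.submatrix σ σ) = (𝒢 E₁ E₂).submatrix σ σ)
    (X H : Matrix (Fin N) (Fin K) ℂ) (α : Fin K → ℂ) (σ : Equiv.Perm (Fin K)) :
    (X.submatrix id σ) * 𝒢 ((H.submatrix id σ)ᴴ * (X.submatrix id σ))
        (Matrix.diagonal (α ∘ σ) * (H.submatrix id σ)ᴴ * (X.submatrix id σ))
      = (X * 𝒢 (Hᴴ * X) (Matrix.diagonal α * Hᴴ * X)).submatrix id σ := by
  have hH : (H.submatrix id σ)ᴴ = Hᴴ.submatrix σ id := by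
    simp [conjTranspose_submatrix]
  have h2 : Hᴴ.submatrix (⇑σ) id * X.submatrix id (⇑σ) = (Hᴴ * X).submatrix σ σ := by
    simpa using Matrix.submatrix_mul_equiv Hᴴ X (⇑σ) (Equiv.refl (Fin N)) (⇑σ)
  have hd : Matrix.diagonal (α ∘ σ) = (Matrix.diagonal α).submatrix σ σ :=
    (Matrix.submatrix_diagonal_equiv α σ).symm
  have h3 : (Matrix.diagonal α).submatrix (⇑σ) (⇑σ) * Hᴴ.submatrix (⇑σ) id
      = (Matrix.diagonal α * Hᴴ).submatrix (⇑σ) id :=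
    Matrix.submatrix_mul_equiv (Matrix.diagonal α) Hᴴ (⇑σ) σ id
  have h4 : (Matrix.diagonal α * Hᴴ).submatrix (⇑σ) id * X.submatrix id (⇑σ)
      = (Matrix.diagonal α * Hᴴ * X).submatrix σ σ := by
    simpa using Matrix.submatrix_mul_equiv (Matrix.diagonal α * Hᴴ) X (⇑σ) (Equiv.refl (Fin N)) (⇑σ)
  rw [hH, h2, hd, h3, h4, h𝒢, ← Matrix.submatrix_mul_equiv X _ id σ (⇑σ)]
end

section
/- Let N, K be natural numbers and let 𝒢 : Matrix (Fin K) (Fin K) ℂ → Matrix (Fin K) (Fin K) ℂ → Matrix (Fin K) (Fin K) ℂ satisfy, for every permutation σ of Fin K and all E₁, E₂ ∈ ℂ^{K×K}, 𝒢(E₁∘(σ,σ), E₂∘(σ,σ)) = 𝒢(E₁, E₂)∘(σ,σ), where M∘(σ,σ) denotes the matrix with entries M_{σ(i),σ(j)}. Define F(X, H, α) = X * 𝒢(Hᴴ * X, diagonal(α) * Hᴴ * X). Then for every unitary matrix U ∈ ℂ^{N×N} and every permutation σ of Fin K, F(U * X^σ, U * H^σ, α∘σ) = U * (F(X, H, α))^σ,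 where M^σ denotes the matrix whose k-th column is the σ(k)-th column of M; that is, the layer satisfies the joint unitary and permutation equivariant property. -/
open Matrix

/-- If `𝒢` is permutation equivariant in the sense
`𝒢(Π E₁ Πᵀ, Π E₂ Πᵀ) = Π 𝒢(E₁, E₂) Πᵀ` (written with `submatrix σ σ`), then the layer
`F(X, H, α) = X * 𝒢(Hᴴ X, diagonal(α) Hᴴ X)` satisfies the joint unitary and permutation
equivariant property. -/
theorem nonlinear_layer_joint_equivariant
    (N K : ℕ)
    (𝒢 : Matrix (Fin K) (Fin K) ℂ → Matrix (Fin K) (Fin K) ℂ → Matrix (Fin K) (Fin K) ℂ)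
    (h𝒢 : ∀ (σ : Equiv.Perm (Fin K)) (E₁ E₂ : Matrix (Fin K) (Fin K) ℂ),
        𝒢 (E₁.submatrix σ σ) (E₂.submatrix σ σ) = (𝒢 E₁ E₂).submatrix σ σ)
    (X H : Matrix (Fin N) (Fin K) ℂ) (α : Fin K → ℂ)
    (U : Matrix (Fin N) (Fin N) ℂ) (hU : Uᴴ * U = 1) (σ : Equiv.Perm (Fin K)) :
    (U * X.submatrix id σ) *
        𝒢 ((U * H.submatrix id σ)ᴴ * (U * X.submatrix id σ))
          (Matrix.diagonal (α ∘ σ) * (U * H.submatrix id σ)ᴴ * (U * X.submatrix id σ))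
      = U * (X * 𝒢 (Hᴴ * X) (Matrix.diagonal α * Hᴴ * X)).submatrix id σ := by
  have key : (U * H.submatrix id σ)ᴴ * (U * X.submatrix id σ)
      = (Hᴴ * X).submatrix σ σ := by
    rw [conjTranspose_mul, Matrix.mul_assoc, ← Matrix.mul_assoc Uᴴ, hU, Matrix.one_mul,
      conjTranspose_submatrix]
    simpa using submatrix_mul_equiv Hᴴ X σ (Equiv.refl _).symm σ
  have key2 : Matrix.diagonal (α ∘ σ) * (U * H.submatrix id σ)ᴴ * (U * X.submatrix id σ)
      = (Matrix.diagonal α * Hᴴ * X).submatrix σ σ := by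
    rw [Matrix.mul_assoc, key, ← submatrix_diagonal_equiv α σ, Matrix.mul_assoc,
      submatrix_mul_equiv]
  rw [key, key2, h𝒢, Matrix.mul_assoc]
  congr 1
  set_option linter.unnecessarySimpa false in
  simpa using submatrix_mul_equiv X (𝒢 (Hᴴ * X) (Matrix.diagonal α * Hᴴ * X)) id σ σ
end
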